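/- First-derivative comparison between the continuous interpolant and the discrete forward difference: let m = 2R+1 be odd, h = L/m, and let φ be the complex grid function determined by coefficients c : {−R,…,R}³ → ℂ via φ_{i,j,k} = Σ_{r,s,t=−R}^{R} c_{r,s,t} e^{2πi(r x_i + s y_j + t z_k)/L}. Then L³ Σ_{r,s,t=−R}^{R} (2π r / L)² |c_{r,s,t}|² ≤ (π/2)² · h³ Σ_{i,j,k=1}^{m} |φ_{i+1,j,k} − φ_{i,j,k}|²/h², where the index i+1 is taken modulo m. -/

import Mathlib

open Finset Real

/-!
The grid characters `e^{2πi n (i - 1/2)/m}` with frequencies `|n| ≤ R < m/2` are orthogonal over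
`i ∈ {1,…,m}`, and so are their threefold products. The forward difference in `i` multiplies the
coefficient `c_{r,s,t}` by `e^{2πi r/m} - 1`, so the discrete Parseval identity turns the right-hand
side into `(π/2)² L m² Σ |c_{r,s,t}|² |e^{2πi r/m} - 1|²`. Jordan's inequality `|sin x| ≥ 2|x|/π`
gives `|e^{2πi r/m} - 1|² ≥ 16 r²/m²`, and termwise this is exactly the left-hand side.
-/

/-- The grid point `x_i = (i - 1/2) h`. -/
noncomputable def xg (h : ℝ) (i : ℤ) : ℝ := ((i : ℝ) - 1 / 2) * h

/-- The complex grid function determined by Fourier coefficients `c` on `{-R,…,R}³`: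
`φ_{i,j,k} = Σ_{r,s,t=-R}^{R} c_{r,s,t} e^{2πi(r x_i + s y_j + t z_k)/L}`
(as a function of the integer indices, it is automatically `m`-periodic, `m = 2R+1`). -/
noncomputable def fgrid (L h : ℝ) (R : ℕ) (c : ℤ × ℤ × ℤ → ℂ) (i j k : ℤ) : ℂ :=
  ∑ r ∈ Finset.Icc (-(R : ℤ)) (R : ℤ), ∑ s ∈ Finset.Icc (-(R : ℤ)) (R : ℤ),
    ∑ t ∈ Finset.Icc (-(R : ℤ)) (R : ℤ),
      c (r, s, t) *
        Complex.exp (2 * (Real.pi : ℂ) * Complex.I *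
          ((r * xg h i + s * xg h j + t * xg h k : ℝ) : ℂ) / (L : ℂ))

open ComplexConjugate

noncomputable def gridChar (m : ℕ) (n i : ℤ) : ℂ :=
  Complex.exp (2 * π * Complex.I * n * ((i : ℂ) - 1 / 2) / m)

lemma gridChar_mul_conj (m : ℕ) (n n' i : ℤ) :
    gridChar m n i * conj (gridChar m n' i) = gridChar m (n - n') i := by
  simp only [gridChar, ← Complex.exp_conj, ← Complex.exp_add, map_div₀, map_mul, map_sub,
    map_ofNat, map_one, Complex.conj_ofReal, Complex.conj_I, map_intCast, map_natCast]
  congr 1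
  push_cast
  ring

lemma gridChar_zero_left (m : ℕ) (i : ℤ) : gridChar m 0 i = 1 := by
  simp [gridChar]

lemma gridChar_add_one (m : ℕ) (n i : ℤ) :
    gridChar m n (i + 1) = gridChar m n i * Complex.exp (2 * π * Complex.I * n / m) := by
  rw [gridChar, gridChar, ← Complex.exp_add]
  congr 1
  push_cast
  ring

lemma gridChar_one_add_natCast (m : ℕ) (n : ℤ) (k : ℕ) :
    gridChar m n (1 + k) = gridChar m n 1 * Complex.exp (2 * π * Complex.I * n / m) ^ k := by
  induction k with
  | zero => simp
  | succ k ih => rw [Nat.cast_succ, ← add_assoc, gridChar_add_one, ih, pow_succ, mul_assoc]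

lemma sum_Icc_one_eq_sum_range {M : Type*} [AddCommMonoid M] (m : ℕ) (f : ℤ → M) :
    ∑ i ∈ Icc (1 : ℤ) m, f i = ∑ k ∈ range m, f (1 + k) := by
  refine sum_nbij' (fun i ↦ (i - 1).toNat) (fun k ↦ 1 + k) ?_ ?_ ?_ ?_ ?_ <;>
    intro a ha <;> simp only [mem_Icc, mem_range] at ha ⊢
  all_goals first | omega | (congr 1; omega)

lemma sum_gridChar_eq_zero {m : ℕ} (hm : m ≠ 0) {n : ℤ} (hn : ¬ (m : ℤ) ∣ n) :
    ∑ i ∈ Icc (1 : ℤ) m, gridChar m n i = 0 := by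
  have hζ := Complex.isPrimitiveRoot_exp m hm
  have hw : Complex.exp (2 * π * Complex.I * n / m) = Complex.exp (2 * π * Complex.I / m) ^ n := by
    rw [← Complex.exp_int_mul]; ring_nf
  have hw1 : Complex.exp (2 * π * Complex.I * n / m) ≠ 1 := by
    rwa [hw, Ne, hζ.zpow_eq_one_iff_dvd]
  have hwm : Complex.exp (2 * π * Complex.I * n / m) ^ m = 1 := by
    rw [hw, ← zpow_natCast, ← zpow_mul, mul_comm n, zpow_mul, zpow_natCast, hζ.pow_eq_one, one_zpow]
  rw [sum_Icc_one_eq_sum_range]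
  simp only [gridChar_one_add_natCast, ← mul_sum, geom_sum_eq hw1, hwm, sub_self, zero_div,
    mul_zero]

def OrthogonalOn {ι κ : Type*} [DecidableEq ι] (B : Finset ι) (G : Finset κ) (F : ι → κ → ℂ)
    (K : ℝ) : Prop :=
  ∀ p ∈ B, ∀ p' ∈ B, ∑ q ∈ G, F p q * conj (F p' q) = if p = p' then (K : ℂ) else 0

lemma orthogonalOn_gridChar {R m : ℕ} (hRm : 2 * R < m) :
    OrthogonalOn (Icc (-(R : ℤ)) R) (Icc (1 : ℤ) m) (gridChar m) m := by
  intro n hn n' hn'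
  simp only [gridChar_mul_conj]
  split_ifs with h
  · simp [h, gridChar_zero_left]
  · rw [mem_Icc] at hn hn'
    refine sum_gridChar_eq_zero (by omega) fun hdvd ↦ h (sub_eq_zero.mp ?_)
    exact Int.eq_zero_of_abs_lt_dvd hdvd (by rw [abs_lt]; omega)

lemma OrthogonalOn.prod {ι κ ι' κ' : Type*} [DecidableEq ι] [DecidableEq ι']
    {B : Finset ι} {G : Finset κ} {F : ι → κ → ℂ} {K : ℝ}
    {B' : Finset ι'} {G' : Finset κ'} {F' : ι' → κ' → ℂ} {K' : ℝ}
    (hF : OrthogonalOn B G F K) (hF' : OrthogonalOn B' G' F' K') :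
    OrthogonalOn (B ×ˢ B') (G ×ˢ G') (fun p q ↦ F p.1 q.1 * F' p.2 q.2) (K * K') := by
  rintro ⟨a, b⟩ hp ⟨a', b'⟩ hp'
  rw [mem_product] at hp hp'
  have hsplit : ∀ q : κ × κ', F a q.1 * F' b q.2 * conj (F a' q.1 * F' b' q.2) =
      F a q.1 * conj (F a' q.1) * (F' b q.2 * conj (F' b' q.2)) := fun q ↦ by
    rw [map_mul]; ring
  simp only [hsplit, sum_product, ← mul_sum, ← sum_mul, hF a hp.1 a' hp'.1, hF' b hp.2 b' hp'.2,
    Prod.mk.injEq]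
  split_ifs <;> simp_all

lemma OrthogonalOn.sum_norm_sq {ι κ : Type*} [DecidableEq ι] {B : Finset ι} {G : Finset κ}
    {F : ι → κ → ℂ} {K : ℝ} (hF : OrthogonalOn B G F K) (a : ι → ℂ) :
    ∑ q ∈ G, ‖∑ p ∈ B, a p * F p q‖ ^ 2 = K * ∑ p ∈ B, ‖a p‖ ^ 2 := by
  apply Complex.ofReal_injective
  push_cast
  simp only [← Complex.mul_conj', map_sum, map_mul, sum_mul_sum]
  calc ∑ q ∈ G, ∑ p ∈ B, ∑ p' ∈ B, a p * F p q * (conj (a p') * conj (F p' q))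
      = ∑ p ∈ B, ∑ p' ∈ B, a p * conj (a p') * ∑ q ∈ G, F p q * conj (F p' q) := by
        rw [sum_comm]
        refine sum_congr rfl fun p _ ↦ ?_
        rw [sum_comm]
        simp only [mul_sum]
        refine sum_congr rfl fun p' _ ↦ sum_congr rfl fun q _ ↦ ?_
        ring
    _ = K * ∑ p ∈ B, a p * conj (a p) := by
        rw [mul_sum]
        refine sum_congr rfl fun p hp ↦ ?_
        rw [sum_eq_single p (fun p' hp' hne ↦ by rw [hF p hp p' hp', if_neg hne.symm, mul_zero])
          (absurd hp), hF p hp p hp, if_pos rfl, mul_comm]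

noncomputable def freqBox (R : ℕ) : Finset (ℤ × ℤ × ℤ) :=
  Icc (-(R : ℤ)) R ×ˢ Icc (-(R : ℤ)) R ×ˢ Icc (-(R : ℤ)) R

noncomputable def gridChar3 (m : ℕ) (p q : ℤ × ℤ × ℤ) : ℂ :=
  gridChar m p.1 q.1 * (gridChar m p.2.1 q.2.1 * gridChar m p.2.2 q.2.2)

lemma orthogonalOn_gridChar3 {R m : ℕ} (hRm : 2 * R < m) :
    OrthogonalOn (freqBox R) (Icc (1 : ℤ) m ×ˢ Icc (1 : ℤ) m ×ˢ Icc (1 : ℤ) m) (gridChar3 m)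
      (m ^ 3) := by
  have h := orthogonalOn_gridChar hRm
  rw [show ((m : ℝ) ^ 3) = m * (m * m) by ring]
  exact h.prod (h.prod h)

lemma gridChar3_succ (m : ℕ) (p : ℤ × ℤ × ℤ) (i j k : ℤ) :
    gridChar3 m p (i + 1, j, k) =
      gridChar3 m p (i, j, k) * Complex.exp (2 * π * Complex.I * p.1 / m) := by
  simp only [gridChar3, gridChar_add_one]
  ring

lemma exp_phase_eq_gridChar3 {L : ℝ} (hL : L ≠ 0) {m : ℕ} (hm : m ≠ 0) (r s t i j k : ℤ) :
    Complex.exp (2 * π * Complex.I *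
        ((r * xg (L / m) i + s * xg (L / m) j + t * xg (L / m) k : ℝ) : ℂ) / L) =
      gridChar3 m (r, s, t) (i, j, k) := by
  have hLc : (L : ℂ) ≠ 0 := by exact_mod_cast hL
  have hmc : (m : ℂ) ≠ 0 := by exact_mod_cast hm
  simp only [gridChar3, gridChar, xg, ← Complex.exp_add]
  congr 1
  push_cast
  field_simp
  ring

lemma fgrid_eq_sum_gridChar3 {L : ℝ} (hL : L ≠ 0) {m : ℕ} (hm : m ≠ 0) (R : ℕ)
    (c : ℤ × ℤ × ℤ → ℂ) (i j k : ℤ) :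
    fgrid L (L / m) R c i j k = ∑ p ∈ freqBox R, c p * gridChar3 m p (i, j, k) := by
  simp only [fgrid, freqBox, sum_product, exp_phase_eq_gridChar3 hL hm]

lemma fgrid_succ_sub {L : ℝ} (hL : L ≠ 0) {m : ℕ} (hm : m ≠ 0) (R : ℕ)
    (c : ℤ × ℤ × ℤ → ℂ) (i j k : ℤ) :
    fgrid L (L / m) R c (i + 1) j k - fgrid L (L / m) R c i j k =
      ∑ p ∈ freqBox R,
        c p * (Complex.exp (2 * π * Complex.I * p.1 / m) - 1) * gridChar3 m p (i, j, k) := by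
  simp only [fgrid_eq_sum_gridChar3 hL hm, gridChar3_succ, ← sum_sub_distrib]
  refine sum_congr rfl fun p _ ↦ ?_
  ring

lemma sum_norm_sq_fgrid_succ_sub {L : ℝ} (hL : L ≠ 0) {R m : ℕ} (hRm : 2 * R < m)
    (c : ℤ × ℤ × ℤ → ℂ) :
    ∑ i ∈ Icc (1 : ℤ) m, ∑ j ∈ Icc (1 : ℤ) m, ∑ k ∈ Icc (1 : ℤ) m,
        ‖fgrid L (L / m) R c (i + 1) j k - fgrid L (L / m) R c i j k‖ ^ 2 =
      m ^ 3 * ∑ p ∈ freqBox R,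
        ‖c p‖ ^ 2 * ‖Complex.exp (2 * π * Complex.I * p.1 / m) - 1‖ ^ 2 := by
  simp only [fgrid_succ_sub hL (by omega : m ≠ 0), ← sum_product', ← norm_mul, ← mul_pow]
  exact (orthogonalOn_gridChar3 hRm).sum_norm_sq _

lemma sq_mul_le_norm_exp_I_mul_sub_one_sq {θ : ℝ} (hθ : |θ| ≤ π) :
    (2 / π * θ) ^ 2 ≤ ‖Complex.exp (Complex.I * θ) - 1‖ ^ 2 := by
  have hjordan := mul_abs_le_abs_sin (x := θ / 2) (by rw [abs_div, abs_two]; linarith)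
  rw [Complex.norm_exp_I_mul_ofReal_sub_one, norm_mul, Real.norm_eq_abs, Real.norm_eq_abs,
    abs_two, ← sq_abs, abs_mul, abs_of_pos (by positivity : 0 < 2 / π)]
  refine pow_le_pow_left₀ (by positivity) ?_ 2
  rw [abs_div, abs_two] at hjordan
  linarith

lemma sixteen_mul_sq_div_sq_le_norm_exp_sub_one_sq {m : ℕ} {r : ℤ} (hr : 2 * |r| ≤ m) :
    16 * (r : ℝ) ^ 2 / (m : ℝ) ^ 2 ≤ ‖Complex.exp (2 * π * Complex.I * r / m) - 1‖ ^ 2 := by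
  rcases Nat.eq_zero_or_pos m with rfl | hm
  · simp
  have hmR : (0 : ℝ) < m := by exact_mod_cast hm
  have hθ : |2 * π * r / m| ≤ π := by
    rw [abs_div, abs_mul, abs_of_pos (by positivity : (0 : ℝ) < 2 * π), Nat.abs_cast,
      div_le_iff₀ hmR]
    have : 2 * |(r : ℝ)| ≤ m := by exact_mod_cast hr
    nlinarith [pi_pos]
  convert sq_mul_le_norm_exp_I_mul_sub_one_sq hθ using 2
  · field_simp
    ring
  · push_cast
    ring_nf

/-- First-derivative comparison between the continuous interpolant and the discrete
forward difference. -/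
theorem stmt13 (L : ℝ) (hL : 0 < L) (R : ℕ) (m : ℕ) (hm : m = 2 * R + 1)
    (h : ℝ) (hh : h = L / m) (c : ℤ × ℤ × ℤ → ℂ)
    (Φ : ℤ → ℤ → ℤ → ℂ) (hΦ : Φ = fgrid L h R c) :
    L ^ 3 * ∑ r ∈ Finset.Icc (-(R : ℤ)) (R : ℤ), ∑ s ∈ Finset.Icc (-(R : ℤ)) (R : ℤ),
        ∑ t ∈ Finset.Icc (-(R : ℤ)) (R : ℤ),
          (2 * Real.pi * r / L) ^ 2 * ‖c (r, s, t)‖ ^ 2 ≤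
      (Real.pi / 2) ^ 2 *
        (h ^ 3 * ∑ i ∈ Finset.Icc (1 : ℤ) (m : ℤ), ∑ j ∈ Finset.Icc (1 : ℤ) (m : ℤ),
          ∑ k ∈ Finset.Icc (1 : ℤ) (m : ℤ),
            ‖Φ (i + 1) j k - Φ i j k‖ ^ 2 / h ^ 2) := by
  subst hΦ hh
  have hRm : 2 * R < m := by omega
  have hmR : (0 : ℝ) < m := by exact_mod_cast (show 0 < m by omega)
  have hscale : ∀ T : ℝ,
      (π / 2) ^ 2 * ((L / m) ^ 3 * (T / (L / m) ^ 2)) = (π / 2) ^ 2 * (L / m) * T :=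
    fun T ↦ by field_simp
  simp only [← sum_div, sum_norm_sq_fgrid_succ_sub hL.ne' hRm c, freqBox, sum_product, hscale,
    mul_sum]
  refine sum_le_sum fun r hr ↦ sum_le_sum fun s _ ↦ sum_le_sum fun t _ ↦ ?_
  have hr' : 2 * |r| ≤ m := by
    rw [mem_Icc] at hr
    rw [hm]
    push_cast
    linarith [abs_le.mpr hr]
  calc L ^ 3 * ((2 * π * r / L) ^ 2 * ‖c (r, s, t)‖ ^ 2)
      = (π / 2) ^ 2 * (L / m) *
          (m ^ 3 * (‖c (r, s, t)‖ ^ 2 * (16 * (r : ℝ) ^ 2 / (m : ℝ) ^ 2))) := by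
        field_simp
        ring
    _ ≤ _ := by gcongr; exact sixteen_mul_sq_div_sq_le_norm_exp_sub_one_sq hr'
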